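/- Let k, l, s, n be integers with 1 ≤ k ≤ s, 1 ≤ l ≤ s, s ≤ n and s < 2l. Then ∑_{j=0}^{k−1} (−1)^{k+j+1} · C(n+2k−s−1, k−j−1) · C(n−s+j, n−s) · C(n+j, 2l−1) = −∑_{i=2k−1}^{2l−1} (−1)^{i} · C(n−s+i, i) · C(2l−s−1, 2l−1−i) · C(i−k, k−1). -/

import Mathlib

/-!
With `M = n - s`, both sides equal `∓ ∑_{t<k} (-1)^(k+t) C(M+t,t) C(2k-2-t,k-1-t) C(n,2l-1-t)`.
On the left, expand `C(n+j,2l-1)` by Vandermonde; on the right, expand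
`C(i-k,k-1) = ∑_{b<k} (-1)^(k-1-b) C(2k-2-b,k-1-b) C(i,b)`. After exchanging the sums, the inner
sums are all of the shape `∑_i (-1)^i C(M+i,i) C(i,b) C(B,N-i)`. Trinomial revision pulls out
`(-1)^b C(M+b,b)`, and what remains is the Chu–Vandermonde convolution of `C(-(M+b+1), ·)` with
`C(B, ·)` in the binomial ring `ℤ`, i.e. the binomial coefficient `C(B-M-b-1, N-b)` with an
integer upper index, which is evaluated by upper negation.
-/

open Finset

theorem Ring.choose_neg_natCast_add_one (A u : ℕ) :
    Ring.choose (-((A : ℤ) + 1)) u = (-1) ^ u * ((A + u).choose u : ℤ) := by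
  rw [Ring.choose_neg, show (A : ℤ) + 1 + u - 1 = ((A + u : ℕ) : ℤ) by push_cast; ring,
    Ring.choose_natCast, Units.smul_def, Int.coe_negOnePow_natCast, smul_eq_mul]

theorem Ring.choose_natCast_sub_natCast_sub_one (m n : ℕ) :
    Ring.choose ((m : ℤ) - n - 1) m = (-1) ^ m * (n.choose m : ℤ) := by
  rw [show (m : ℤ) - n - 1 = -((n : ℤ) + 1 - m) by ring, Ring.choose_neg,
    show (n : ℤ) + 1 - m + m - 1 = n by ring, Ring.choose_natCast, Units.smul_def,
    Int.coe_negOnePow_natCast, smul_eq_mul]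

theorem sum_range_neg_one_pow_mul_add_choose_mul_choose (A B m : ℕ) :
    ∑ u ∈ range (m + 1), (-1 : ℤ) ^ u * (A + u).choose u * B.choose (m - u) =
      Ring.choose ((B : ℤ) - (A + 1)) m := by
  rw [sub_eq_neg_add, Ring.add_choose_eq _ (Commute.all _ _),
    Nat.sum_antidiagonal_eq_sum_range_succ (fun i j ↦ Ring.choose (-((A : ℤ) + 1)) i *
      Ring.choose (B : ℤ) j)]
  refine sum_congr rfl fun u _ ↦ ?_
  rw [Ring.choose_neg_natCast_add_one, Ring.choose_natCast]

theorem Nat.add_choose_mul_choose_add (M t u : ℕ) :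
    (M + t + u).choose (t + u) * (t + u).choose t = (M + t).choose t * (M + t + u).choose u := by
  rw [Nat.choose_symm_add, Nat.choose_mul (Nat.le_add_left u t), Nat.add_sub_cancel,
    Nat.add_sub_cancel, Nat.mul_comm]

theorem sum_range_neg_one_pow_mul_add_choose_mul_choose_mul_choose (M B N b : ℕ) (hb : b ≤ N) :
    ∑ i ∈ range (N + 1), (-1 : ℤ) ^ i * (M + i).choose i * i.choose b * B.choose (N - i) =
      (-1) ^ b * (M + b).choose b * Ring.choose ((B : ℤ) - (M + b + 1)) (N - b) := by
  obtain ⟨m, rfl⟩ := Nat.exists_eq_add_of_le hb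
  rw [add_assoc, sum_range_add,
    sum_eq_zero fun i hi ↦ by simp [Nat.choose_eq_zero_of_lt (mem_range.1 hi)], zero_add,
    Nat.add_sub_cancel_left, show ((M : ℤ) + b + 1) = ((M + b : ℕ) : ℤ) + 1 by push_cast; ring,
    ← sum_range_neg_one_pow_mul_add_choose_mul_choose, mul_sum]
  refine sum_congr rfl fun u _ ↦ ?_
  have h := congrArg (Nat.cast : ℕ → ℤ) (Nat.add_choose_mul_choose_add M b u)
  push_cast at h
  rw [show b + m - (b + u) = m - u by omega, pow_add, ← add_assoc]
  linear_combination ((-1 : ℤ) ^ b * (-1) ^ u * (B.choose (m - u) : ℤ)) * h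

theorem Nat.add_choose_eq_sum_range (n j r K : ℕ) (hj : j < K) (hK : K ≤ r + 1) :
    (n + j).choose r = ∑ t ∈ range K, j.choose t * n.choose (r - t) := by
  rw [add_comm, Nat.add_choose_eq,
    Nat.sum_antidiagonal_eq_sum_range_succ (fun a b ↦ j.choose a * n.choose b)]
  refine (sum_subset (range_subset_range.2 hK) fun t _ htK ↦ ?_).symm
  rw [Nat.choose_eq_zero_of_lt (by simp at htK; omega), zero_mul]

theorem natCast_sub_choose_eq_sum_range (i k : ℕ) (hk : 1 ≤ k) (hki : k ≤ i) :
    ((i - k).choose (k - 1) : ℤ) =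
      ∑ b ∈ range k, (-1) ^ (k - 1 - b) * ((2 * k - 2 - b).choose (k - 1 - b) : ℤ) * i.choose b := by
  obtain ⟨m, rfl⟩ : ∃ m, k = m + 1 := ⟨k - 1, by omega⟩
  rw [← sum_range_reflect, Nat.add_sub_cancel, ← Ring.choose_natCast, Nat.cast_sub hki,
    Nat.cast_succ, ← sum_range_neg_one_pow_mul_add_choose_mul_choose]
  refine sum_congr rfl fun u hu ↦ ?_
  have hu : u < m + 1 := mem_range.1 hu
  rw [show m - (m - u) = u by omega, show 2 * (m + 1) - 2 - (m - u) = m + u by omega]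

namespace Dkl

def reducedSum (M n k l : ℕ) : ℤ :=
  ∑ t ∈ range k, (-1) ^ (k + t) * ((M + t).choose t : ℤ) *
    (2 * k - 2 - t).choose (k - 1 - t) * n.choose (2 * l - 1 - t)

theorem alternatingSum_eq_neg_reducedSum (M n k l : ℕ) (hk : 1 ≤ k) (hkl : k ≤ 2 * l) :
    ∑ j ∈ range k, (-1 : ℤ) ^ (k + j + 1) * ((M + 2 * k - 1).choose (k - 1 - j) : ℤ) *
        (M + j).choose j * (n + j).choose (2 * l - 1) =
      -reducedSum M n k l := by
  have hvandermonde : ∀ j ∈ range k,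
      (-1 : ℤ) ^ (k + j + 1) * ((M + 2 * k - 1).choose (k - 1 - j) : ℤ) *
        (M + j).choose j * (n + j).choose (2 * l - 1) =
      ∑ t ∈ range k, (-1) ^ (k + 1) * (n.choose (2 * l - 1 - t) : ℤ) *
        ((-1) ^ j * (M + j).choose j * j.choose t * (M + 2 * k - 1).choose (k - 1 - j)) := by
    intro j hj
    rw [Nat.add_choose_eq_sum_range n j (2 * l - 1) k (mem_range.1 hj) (by omega)]
    push_cast
    rw [mul_sum]
    exact sum_congr rfl fun t _ ↦ by ring
  rw [sum_congr rfl hvandermonde, sum_comm, reducedSum, ← sum_neg_distrib]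
  refine sum_congr rfl fun t ht ↦ ?_
  have ht : t < k := mem_range.1 ht
  rw [← mul_sum, show range k = range (k - 1 + 1) by rw [Nat.sub_add_cancel hk],
    sum_range_neg_one_pow_mul_add_choose_mul_choose_mul_choose M _ _ t (by omega),
    show ((M + 2 * k - 1 : ℕ) : ℤ) - (M + t + 1) = ((2 * k - 2 - t : ℕ) : ℤ) by omega,
    Ring.choose_natCast]
  ring

theorem nonalternatingSum_eq_reducedSum (k l s n : ℕ) (hk : 1 ≤ k) (hks : k ≤ s) (hsn : s ≤ n)
    (hs : s < 2 * l) :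
    ∑ i ∈ Icc (2 * k - 1) (2 * l - 1), (-1 : ℤ) ^ i * ((n - s + i).choose i : ℤ) *
        (2 * l - s - 1).choose (2 * l - 1 - i) * (i - k).choose (k - 1) =
      reducedSum (n - s) n k l := by
  have hlow : ∀ i < s, (2 * l - s - 1).choose (2 * l - 1 - i) = 0 := fun i hi ↦
    Nat.choose_eq_zero_of_lt (by omega)
  have hexpand : ∑ i ∈ Icc (2 * k - 1) (2 * l - 1), (-1 : ℤ) ^ i * ((n - s + i).choose i : ℤ) *
        (2 * l - s - 1).choose (2 * l - 1 - i) * (i - k).choose (k - 1) =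
      ∑ i ∈ range (2 * l - 1 + 1), ∑ b ∈ range k,
        (-1) ^ (k - 1 - b) * ((2 * k - 2 - b).choose (k - 1 - b) : ℤ) *
          ((-1) ^ i * (n - s + i).choose i * i.choose b * (2 * l - s - 1).choose (2 * l - 1 - i)) := by
    have hsub : Icc (2 * k - 1) (2 * l - 1) ⊆ range (2 * l - 1 + 1) := fun i hi ↦ by
      rw [mem_Icc] at hi; rw [mem_range]; omega
    rw [sum_subset hsub fun i hi hi' ↦ ?_]
    · refine sum_congr rfl fun i _ ↦ ?_
      rcases lt_or_ge i s with his | his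
      · simp [hlow i his]
      · rw [natCast_sub_choose_eq_sum_range i k hk (by omega), mul_sum]
        exact sum_congr rfl fun b _ ↦ by ring
    · rcases lt_or_ge i s with his | his
      · simp [hlow i his]
      · rw [mem_Icc] at hi'; rw [mem_range] at hi
        simp [Nat.choose_eq_zero_of_lt (show i - k < k - 1 by omega)]
  rw [hexpand, sum_comm, reducedSum]
  refine sum_congr rfl fun b hb ↦ ?_
  have hb : b < k := mem_range.1 hb
  rw [← mul_sum, sum_range_neg_one_pow_mul_add_choose_mul_choose_mul_choose _ _ _ b (by omega),
    show ((2 * l - s - 1 : ℕ) : ℤ) - ((n - s : ℕ) + b + 1) = ((2 * l - 1 - b : ℕ) : ℤ) - n - 1 by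
      omega,
    Ring.choose_natCast_sub_natCast_sub_one]
  have hsign : (-1 : ℤ) ^ (k - 1 - b) * ((-1) ^ b * (-1) ^ (2 * l - 1 - b)) = (-1) ^ (k + b) := by
    rw [← pow_add, ← pow_add]
    exact neg_one_pow_congr (by simp only [Nat.even_iff]; omega)
  rw [← hsign]
  ring

end Dkl

theorem Dkl_nonalternating_case2_general (k l s n : ℕ)
    (hk1 : 1 ≤ k) (hks : k ≤ s)
    (hsn : s ≤ n) (hs2l : s < 2 * l) :
    ∑ j ∈ Finset.range k,
      (-1 : ℤ) ^ (k + j + 1) * (Nat.choose (n + 2 * k - s - 1) (k - j - 1) : ℤ) *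
        (Nat.choose (n - s + j) (n - s) : ℤ) * (Nat.choose (n + j) (2 * l - 1) : ℤ)
      = -∑ i ∈ Finset.Icc (2 * k - 1) (2 * l - 1),
          (-1 : ℤ) ^ i * (Nat.choose (n - s + i) i : ℤ) *
            (Nat.choose (2 * l - s - 1) (2 * l - 1 - i) : ℤ) *
            (Nat.choose (i - k) (k - 1) : ℤ) := by
  rw [Dkl.nonalternatingSum_eq_reducedSum k l s n hk1 hks hsn hs2l,
    ← Dkl.alternatingSum_eq_neg_reducedSum (n - s) n k l hk1 (by omega)]
  refine sum_congr rfl fun j _ ↦ ?_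
  rw [show n + 2 * k - s - 1 = n - s + 2 * k - 1 by omega, Nat.sub_right_comm k j 1,
    Nat.choose_symm_add]

/-- Non-alternating form of the sum `D_{k,l}` (case `s < 2l`):
`∑_{j=0}^{k−1} (−1)^{k+j+1} C(n+2k−s−1,k−j−1) C(n−s+j,n−s) C(n+j,2l−1)
  = −∑_{i=2k−1}^{2l−1} (−1)^i C(n−s+i,i) C(2l−s−1,2l−1−i) C(i−k,k−1)`. -/
theorem Dkl_nonalternating_case2 (k l s n : ℕ)
    (hk1 : 1 ≤ k) (hks : k ≤ s) (hl1 : 1 ≤ l) (hls : l ≤ s)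
    (hsn : s ≤ n) (hs2l : s < 2 * l) :
    ∑ j ∈ Finset.range k,
      (-1 : ℤ) ^ (k + j + 1) * (Nat.choose (n + 2 * k - s - 1) (k - j - 1) : ℤ) *
        (Nat.choose (n - s + j) (n - s) : ℤ) * (Nat.choose (n + j) (2 * l - 1) : ℤ)
      = -∑ i ∈ Finset.Icc (2 * k - 1) (2 * l - 1),
          (-1 : ℤ) ^ i * (Nat.choose (n - s + i) i : ℤ) *
            (Nat.choose (2 * l - s - 1) (2 * l - 1 - i) : ℤ) *
            (Nat.choose (i - k) (k - 1) : ℤ) :=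
  Dkl_nonalternating_case2_general k l s n hk1 hks hsn hs2l
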